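/- arXiv:2006.04626 — 3 statements merged into one kernel-verified Lean document; each statement's English description precedes it below -/
import Mathlib

section
/- Let T ⊆ ℕ_0^d be an almost symmetric GNS with Frobenius element f, and let x be a minimal generator of T with x ≤ f (componentwise; note x ≠ f since f ∉ T), so that T ∖ {x} is again a GNS. Then T ∖ {x} is almost symmetric if and only if f − x ∈ PF(T ∖ {x}); and in that case PF(T) = PF(T ∖ {x}) ∖ {x, f − x}. -/
open scoped BigOperators

/-- A generalized numerical semigroup: a submonoid of `ℕ^d` with finite complement. -/
def IsGNS {d : ℕ} (S : Set (Fin d → ℕ)) : Prop :=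
  (0 : Fin d → ℕ) ∈ S ∧ (∀ x y : Fin d → ℕ, x ∈ S → y ∈ S → x + y ∈ S) ∧ Sᶜ.Finite

/-- The genus: number of gaps. -/
noncomputable def genus {d : ℕ} (S : Set (Fin d → ℕ)) : ℕ := Sᶜ.ncard

/-- Pseudo-Frobenius elements. -/
def PF {d : ℕ} (S : Set (Fin d → ℕ)) : Set (Fin d → ℕ) :=
  {h | h ∉ S ∧ ∀ s ∈ S, s ≠ 0 → h + s ∈ S}

/-- The type: number of pseudo-Frobenius elements. -/
noncomputable def typ {d : ℕ} (S : Set (Fin d → ℕ)) : ℕ := (PF S).ncard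

/-- Maximal elements of a set with respect to a relation. -/
def Maximals {α : Type*} (le : α → α → Prop) (X : Set α) : Set α :=
  {x ∈ X | ∀ y ∈ X, le x y → x = y}

/-- `f` is the unique maximal element of the set of gaps w.r.t. the componentwise order. -/
def IsFrobenius {d : ℕ} (S : Set (Fin d → ℕ)) (f : Fin d → ℕ) : Prop :=
  Maximals (· ≤ ·) Sᶜ = {f}

/-- Almost symmetric: `2 g(S) + 1 - t(S) = ∏ (h i + 1)` for some gap `h`. -/
def AlmostSymmetric {d : ℕ} (S : Set (Fin d → ℕ)) : Prop :=
  ∃ h ∉ S, 2 * genus S + 1 = typ S + ∏ i, (h i + 1)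

/-- Special gaps. -/
def SG {d : ℕ} (S : Set (Fin d → ℕ)) : Set (Fin d → ℕ) :=
  {h ∈ PF S | h + h ∈ S}

/-- The partial order `≤_S` : `y ≤_S x` iff `x - y ∈ S`. -/
def leS {d : ℕ} (S : Set (Fin d → ℕ)) (x y : Fin d → ℕ) : Prop :=
  ∃ s ∈ S, x + s = y

/-- The Apéry set of `S` with respect to `n`. -/
def Ap {d : ℕ} (S : Set (Fin d → ℕ)) (n : Fin d → ℕ) : Set (Fin d → ℕ) :=
  {s ∈ S | ¬ ∃ u ∈ S, u + n = s}

/-- The reduced Apéry set of `S` with respect to `n`. -/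
def Cred {d : ℕ} (S : Set (Fin d → ℕ)) (n : Fin d → ℕ) : Set (Fin d → ℕ) :=
  {s ∈ Ap S n | ∃ h, h ∉ S ∧ s ≤ h + n}

/-- A monomial order on `ℕ^d` given by its strict-order relation. -/
def IsMonomialOrder (d : ℕ) (lt : (Fin d → ℕ) → (Fin d → ℕ) → Prop) : Prop :=
  (∀ a, ¬ lt a a) ∧ (∀ a b c, lt a b → lt b c → lt a c) ∧
  (∀ a b, a ≠ b → lt a b ∨ lt b a) ∧
  (∀ u a b, lt a b → lt (a + u) (b + u)) ∧
  (∀ a, a ≠ (0 : Fin d → ℕ) → lt 0 a)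

/-- Minimal generator of a GNS. -/
def IsMinGen {d : ℕ} (S : Set (Fin d → ℕ)) (x : Fin d → ℕ) : Prop :=
  x ∈ S ∧ x ≠ 0 ∧ ∀ y ∈ S, ∀ z ∈ S, y ≠ 0 → z ≠ 0 → y + z ≠ x

/-- Irreducible GNS: not an intersection of two GNSs properly containing it. -/
def GNSIrreducible {d : ℕ} (S : Set (Fin d → ℕ)) : Prop :=
  ¬ ∃ S₁ S₂ : Set (Fin d → ℕ), IsGNS S₁ ∧ IsGNS S₂ ∧ S ⊂ S₁ ∧ S ⊂ S₂ ∧ S = S₁ ∩ S₂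

/-- Pseudo-symmetric: `PF S = {f, f/2}`. -/
def PseudoSymmetric {d : ℕ} (S : Set (Fin d → ℕ)) : Prop :=
  ∃ f q : Fin d → ℕ, f ≠ q ∧ q + q = f ∧ PF S = {f, q}

/-!
Write `B` for the set of gaps `h` of a GNS `S` with Frobenius element `f` such that `f - h` is a
gap as well. The map `s ↦ f - s` sends the elements of `S` below `f` bijectively onto the
remaining gaps; as the box `[0, f]` consists of all gaps and the elements of `S` below `f`, this
gives `2 g(S) = |B| + |f + 1|_×`. Every pseudo-Frobenius element other than
`f` lies in `B`, so `t(S) ≤ |B| + 1`, and since `|h + 1|_× ≤ |f + 1|_×` for every gap `h`,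
`S` is almost symmetric exactly when `B ⊆ PF(S)`.

For `S = T ∖ {x}` the gaps are those of `T` together with `x`, and `x ∈ PF(S)`. Once
`f - x ∈ PF(S)`, every `h ∈ PF(T)` stays pseudo-Frobenius in `S`: `h + s = x` would put
`f - h = (f - x) + s` in `T`. Comparing the criterion `B ⊆ PF` for `S` and for `T`, the only
new pair of gaps is `{x, f - x}`.
-/

variable {d : ℕ} {S T : Set (Fin d → ℕ)} {f h x : Fin d → ℕ}

theorem IsFrobenius.notMem (hf : IsFrobenius S f) : f ∉ S :=
  (hf.symm ▸ Set.mem_singleton f : f ∈ Maximals (· ≤ ·) Sᶜ).1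

theorem IsFrobenius.le_of_notMem (hf : IsFrobenius S f) (hS : Sᶜ.Finite) (hh : h ∉ S) :
    h ≤ f := by
  obtain ⟨b, hhb, hb⟩ := hS.exists_le_maximal hh
  have hbf : b ∈ Maximals (· ≤ ·) Sᶜ :=
    ⟨hb.prop, fun c hc hbc => le_antisymm hbc (hb.2 hc hbc)⟩
  rw [hf, Set.mem_singleton_iff] at hbf
  exact hbf ▸ hhb

theorem isFrobenius_of_forall_le (hf : f ∉ S) (hle : ∀ h ∉ S, h ≤ f) : IsFrobenius S f := by
  ext h
  refine ⟨fun hh => hh.2 f hf (hle h hh.1), ?_⟩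
  rintro rfl
  exact ⟨hf, fun g hg hfg => le_antisymm hfg (hle g hg)⟩

theorem IsFrobenius.mem_PF (hf : IsFrobenius S f) (hS : Sᶜ.Finite) : f ∈ PF S := by
  refine ⟨hf.notMem, fun s _ hs0 => ?_⟩
  by_contra hfs
  exact hs0 (by simpa using hf.le_of_notMem hS hfs)

theorem tsub_notMem_of_mem_PF (hh : h ∈ PF S) (hhf : h < f) (hf : f ∉ S) : f - h ∉ S :=
  fun hfh => hf (add_tsub_cancel_of_le hhf.le ▸ hh.2 _ hfh (tsub_pos_of_lt hhf).ne')

theorem ncard_Iic (f : Fin d → ℕ) : (Set.Iic f).ncard = ∏ i, (f i + 1) := by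
  rw [← Finset.coe_Iic, Set.ncard_coe_finset, Pi.card_Iic]
  simp

section Counting

variable (hS : IsGNS S) (hf : IsFrobenius S f)
include hS hf

theorem image_tsub_inter_Iic :
    (f - ·) '' (S ∩ Set.Iic f) = Sᶜ ∩ {h | f - h ∈ S} := by
  ext h
  constructor
  · rintro ⟨s, ⟨hs, hsf : s ≤ f⟩, rfl⟩
    refine ⟨fun hfs => hf.notMem ?_, by rwa [Set.mem_ofPred_eq, tsub_tsub_cancel_of_le hsf]⟩
    simpa [add_tsub_cancel_of_le hsf] using hS.2.1 s _ hs hfs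
  · rintro ⟨hh, hfh⟩
    exact ⟨f - h, ⟨hfh, Set.mem_Iic.2 tsub_le_self⟩,
      tsub_tsub_cancel_of_le (hf.le_of_notMem hS.2.2 hh)⟩

theorem genus_add_ncard_inter_Iic : genus S + (S ∩ Set.Iic f).ncard = ∏ i, (f i + 1) := by
  have hgaps : Set.Iic f \ S = Sᶜ :=
    Set.sdiff_eq_compl_inter.trans (Set.inter_eq_left.2 fun _ => hf.le_of_notMem hS.2.2)
  rw [← ncard_Iic, ← Set.ncard_inter_add_ncard_sdiff_eq_ncard (Set.Iic f) S (Set.finite_Iic f),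
    hgaps, Set.inter_comm, genus, add_comm]

theorem two_mul_genus_eq :
    2 * genus S = {h | h ∉ S ∧ f - h ∉ S}.ncard + ∏ i, (f i + 1) := by
  have hsplit := Set.ncard_inter_add_ncard_sdiff_eq_ncard Sᶜ {h | f - h ∈ S} hS.2.2
  have hdual : (Sᶜ ∩ {h | f - h ∈ S}).ncard = (S ∩ Set.Iic f).ncard := by
    rw [← image_tsub_inter_Iic hS hf]
    refine Set.InjOn.ncard_image fun a ⟨_, (ha : a ≤ f)⟩ b ⟨_, (hb : b ≤ f)⟩ hab => ?_
    simpa [tsub_tsub_cancel_of_le ha, tsub_tsub_cancel_of_le hb] using congrArg (f - ·) hab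
  have hB : Sᶜ \ {h | f - h ∈ S} = {h | h ∉ S ∧ f - h ∉ S} := rfl
  rw [hB, hdual] at hsplit
  have := genus_add_ncard_inter_Iic hS hf
  rw [genus] at this ⊢
  omega

theorem PF_subset_insert : PF S ⊆ insert f {h | h ∉ S ∧ f - h ∉ S} := by
  intro h hh
  rcases eq_or_ne h f with rfl | hne
  · exact Set.mem_insert _ _
  · exact Or.inr ⟨hh.1, tsub_notMem_of_mem_PF hh
      (lt_of_le_of_ne (hf.le_of_notMem hS.2.2 hh.1) hne) hf.notMem⟩

theorem almostSymmetric_iff :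
    AlmostSymmetric S ↔ ∀ h ∉ S, f - h ∉ S → h ∈ PF S := by
  have hgenus := two_mul_genus_eq hS hf
  set B := {h | h ∉ S ∧ f - h ∉ S}
  have hBfin : B.Finite := hS.2.2.subset fun _ hh => hh.1
  have hfB : f ∉ B := fun hfB => hfB.2 (by simpa using hS.1)
  have hcard : (insert f B).ncard = B.ncard + 1 := Set.ncard_insert_of_notMem hfB hBfin
  constructor
  · rintro ⟨g, hg, hsum⟩
    have hprod : ∏ i, (g i + 1) ≤ ∏ i, (f i + 1) :=
      Finset.prod_le_prod' fun i _ => Nat.succ_le_succ (hf.le_of_notMem hS.2.2 hg i)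
    have hPF : PF S = insert f B := Set.eq_of_subset_of_ncard_le (PF_subset_insert hS hf)
      (by rw [typ] at hsum; omega) (hBfin.insert f)
    exact fun h hh hfh => hPF ▸ Or.inr ⟨hh, hfh⟩
  · intro hBPF
    have hPF : PF S = insert f B := (PF_subset_insert hS hf).antisymm
      (Set.insert_subset (hf.mem_PF hS.2.2) fun h hh => hBPF h hh.1 hh.2)
    refine ⟨f, hf.notMem, ?_⟩
    rw [typ, hPF, hcard]
    omega

end Counting

theorem IsMinGen.isGNS_diff_singleton (hT : IsGNS T) (hx : IsMinGen T x) : IsGNS (T \ {x}) := by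
  obtain ⟨h0, hadd, hfin⟩ := hT
  refine ⟨⟨h0, hx.2.1.symm⟩, fun y z hy hz => ⟨hadd y z hy.1 hz.1, fun hyz => ?_⟩, ?_⟩
  · rcases eq_or_ne y 0 with rfl | hy0
    · exact hz.2 (by simpa using hyz)
    rcases eq_or_ne z 0 with rfl | hz0
    · exact hy.2 (by simpa using hyz)
    exact hx.2.2 y hy.1 z hz.1 hy0 hz0 hyz
  · rw [Set.sdiff_eq, Set.compl_inter, compl_compl]
    exact hfin.union (Set.finite_singleton x)

theorem mem_PF_diff_singleton (hT : IsGNS T) (hx : x ∈ T) : x ∈ PF (T \ {x}) :=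
  ⟨fun hx' => hx'.2 rfl,
    fun s hs hs0 => ⟨hT.2.1 x s hx hs.1, fun hxs => hs0 (by simpa using hxs)⟩⟩

theorem PF_subset_PF_diff_singleton (hT : IsGNS T) (hf : IsFrobenius T f) (hxf : x ≤ f)
    (hfx : f - x ∈ PF (T \ {x})) : PF T ⊆ PF (T \ {x}) := by
  intro h hh
  refine ⟨fun h' => hh.1 h'.1, fun s hs hs0 => ⟨hh.2 s hs.1 hs0, fun hhs => ?_⟩⟩
  rw [Set.mem_singleton_iff] at hhs
  have hhf : h < f := lt_of_le_of_ne (hf.le_of_notMem hT.2.2 hh.1) fun hhf => hs0 <| by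
    rw [hhf] at hhs
    simpa using (hhs ▸ hxf : f + s ≤ f)
  have hfh : f - h = (f - x) + s := by
    rw [eq_comm, ← hhs]
    refine eq_tsub_of_add_eq ?_
    rw [add_assoc, add_comm s h, tsub_add_cancel_of_le (hhs ▸ hxf)]
  exact tsub_notMem_of_mem_PF hh hhf hf.notMem (hfh ▸ (hfx.2 s hs hs0).1)

theorem isFrobenius_diff_singleton (hT : IsGNS T) (hf : IsFrobenius T f) (hxf : x ≤ f) :
    IsFrobenius (T \ {x}) f :=
  isFrobenius_of_forall_le (fun h => hf.notMem h.1) fun h hh =>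
    if hhx : h = x then hhx ▸ hxf else hf.le_of_notMem hT.2.2 fun hhT => hh ⟨hhT, hhx⟩

section AlmostSymmetric

variable (hT : IsGNS T) (hf : IsFrobenius T f) (hAS : AlmostSymmetric T) (hxf : x ≤ f)
include hT hf hAS hxf

theorem almostSymmetric_diff_singleton_iff (hx : IsMinGen T x) :
    AlmostSymmetric (T \ {x}) ↔ f - x ∈ PF (T \ {x}) := by
  rw [almostSymmetric_iff hT hf] at hAS
  rw [almostSymmetric_iff (hx.isGNS_diff_singleton hT) (isFrobenius_diff_singleton hT hf hxf)]
  refine ⟨fun hB => hB _ (fun hfx => ?_) fun hx' => ?_, fun hfx h hh hfh => ?_⟩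
  · exact hf.notMem (add_tsub_cancel_of_le hxf ▸ hT.2.1 x _ hx.1 hfx.1)
  · exact (tsub_tsub_cancel_of_le hxf ▸ hx').2 rfl
  rcases eq_or_ne h x with rfl | hhx
  · exact mem_PF_diff_singleton hT hx.1
  have hhT : h ∉ T := fun hhT => hh ⟨hhT, hhx⟩
  rcases eq_or_ne (f - h) x with hfhx | hfhx
  · exact eq_tsub_of_add_eq (hfhx ▸ add_tsub_cancel_of_le (hf.le_of_notMem hT.2.2 hhT)) ▸ hfx
  · exact PF_subset_PF_diff_singleton hT hf hxf hfx (hAS h hhT fun hfhT => hfh ⟨hfhT, hfhx⟩)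

theorem PF_eq_PF_diff_singleton_sdiff (hx : x ∈ T) (hx0 : x ≠ 0)
    (hfx : f - x ∈ PF (T \ {x})) : PF T = PF (T \ {x}) \ {x, f - x} := by
  rw [almostSymmetric_iff hT hf] at hAS
  refine Set.Subset.antisymm (fun h hh => ⟨PF_subset_PF_diff_singleton hT hf hxf hfx hh, ?_⟩)
    fun h ⟨hh, hhx⟩ => ?_
  · rintro (rfl | rfl)
    · exact hh.1 hx
    · exact hf.notMem (tsub_add_cancel_of_le hxf ▸ hh.2 x hx hx0)
  have hhT : h ∉ T := fun hhT => hh.1 ⟨hhT, fun e => hhx (Or.inl e)⟩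
  have hhf := hf.le_of_notMem hT.2.2 hhT
  rcases eq_or_lt_of_le hhf with rfl | hlt
  · exact hf.mem_PF hT.2.2
  refine hAS h hhT fun hfhT => hhx (Or.inr ?_)
  have hfhx : f - h = x :=
    not_not.1 fun hne => tsub_notMem_of_mem_PF hh hlt (fun hfx => hf.notMem hfx.1) ⟨hfhT, hne⟩
  exact eq_tsub_of_add_eq (hfhx ▸ add_tsub_cancel_of_le hhf)

end AlmostSymmetric

theorem statement16_general (d : ℕ) (T : Set (Fin d → ℕ)) (hT : IsGNS T)
    (f : Fin d → ℕ) (hf : IsFrobenius T f) (hAS : AlmostSymmetric T)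
    (x : Fin d → ℕ) (hx : IsMinGen T x) (hxf : x ≤ f) :
    (AlmostSymmetric (T \ {x}) ↔ f - x ∈ PF (T \ {x})) ∧
    (AlmostSymmetric (T \ {x}) → PF T = PF (T \ {x}) \ {x, f - x}) := by
  have hiff := almostSymmetric_diff_singleton_iff hT hf hAS hxf hx
  exact ⟨hiff, fun hASx =>
    PF_eq_PF_diff_singleton_sdiff hT hf hAS hxf hx.1 hx.2.1 (hiff.1 hASx)⟩

/-- for an almost symmetric GNS `(T,f)` and a minimal generator `x ≤ f`,
`T ∖ {x}` is almost symmetric iff `f - x ∈ PF(T ∖ {x})`; in that case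
`PF(T) = PF(T ∖ {x}) ∖ {x, f - x}`. -/
theorem statement16 (d : ℕ) (hd : 0 < d) (T : Set (Fin d → ℕ)) (hT : IsGNS T)
    (f : Fin d → ℕ) (hf : IsFrobenius T f) (hAS : AlmostSymmetric T)
    (x : Fin d → ℕ) (hx : IsMinGen T x) (hxf : x ≤ f) :
    (AlmostSymmetric (T \ {x}) ↔ f - x ∈ PF (T \ {x})) ∧
    (AlmostSymmetric (T \ {x}) → PF T = PF (T \ {x}) \ {x, f - x}) :=
  statement16_general d T hT f hf hAS x hx hxf
end

section
/- Let T ⊆ ℕ_0^d be a nonordinary almost symmetric GNS with Frobenius element f, let ≺ be a monomial order on ℕ_0^d, and let x = low_≺(T) be the ≺-minimum of the (nonempty) set {z ∈ T : z ≠ 0 and z ≤ f}. Then x is a minimal generator of T, f − x ∈ PF(T ∖ {x}), and T ∖ {x} is an almost symmetric GNS (with Frobenius element f). -/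
open scoped BigOperators

/-!
Reflection `h ↦ f - h` maps the elements of `T` below `f` bijectively onto the gaps `h` with
`f - h ∈ T`, so `2 g(T) = |f+1|_× + #D`, where `D` is the set of gaps `h` with `f - h` also a
gap. Every pseudo-Frobenius element other than `f` lies in `D`, hence
`2 g + 1 - t ≥ |f+1|_× ≥ |h+1|_×` for every gap `h`, and almost symmetry forces both
`PF(T) = {f} ∪ D` and `2 g + 1 - t = |f+1|_×`.

A monomial order refines the componentwise order, so `x` is componentwise minimal in `T ∖ {0}`.
Removing it adds the single gap `x` and, using `PF(T) = {f} ∪ D`, exactly the two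
pseudo-Frobenius elements `x` and `f - x`; so `2 g + 1 - t = |f+1|_×` still holds.
-/

open Set

variable {d : ℕ} {T : Set (Fin d → ℕ)} {f x : Fin d → ℕ}

theorem isFrobenius_of_isGreatest (hf : IsGreatest Tᶜ f) : IsFrobenius T f := by
  ext y
  refine ⟨fun hy => hy.2 f hf.1 (hf.2 hy.1), ?_⟩
  rintro rfl
  exact ⟨hf.1, fun z hz hyz => le_antisymm hyz (hf.2 hz)⟩

theorem IsFrobenius.isGreatest (hfin : Tᶜ.Finite) (hf : IsFrobenius T f) :
    IsGreatest Tᶜ f := by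
  have hfmax : f ∈ Maximals (· ≤ ·) Tᶜ := hf ▸ rfl
  refine ⟨hfmax.1, fun h hh => ?_⟩
  obtain ⟨m, hhm, hm⟩ := hfin.exists_le_maximal hh
  have hmmax : m ∈ Maximals (· ≤ ·) Tᶜ :=
    ⟨hm.prop, fun y hy hmy => le_antisymm hmy (hm.2 hy hmy)⟩
  rw [hf, mem_singleton_iff] at hmmax
  exact hmmax ▸ hhm

theorem ncard_Iic_eq_prod (f : Fin d → ℕ) : (Iic f).ncard = ∏ i, (f i + 1) := by
  rw [← Finset.coe_Iic, ncard_coe_finset, Pi.card_Iic]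
  simp

def dualGaps (T : Set (Fin d → ℕ)) (f : Fin d → ℕ) : Set (Fin d → ℕ) :=
  {h | h ∉ T ∧ f - h ∉ T}

theorem sub_notMem_of_mem_of_le (hT : IsGNS T) (hf : IsGreatest Tᶜ f) {z : Fin d → ℕ}
    (hz : z ∈ T) (hzf : z ≤ f) : f - z ∉ T := fun h =>
  hf.1 (add_tsub_cancel_of_le hzf ▸ hT.2.1 z (f - z) hz h)

theorem two_mul_genus_eq_s17 (hT : IsGNS T) (hf : IsGreatest Tᶜ f) :
    2 * genus T = ∏ i, (f i + 1) + (dualGaps T f).ncard := by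
  have hgaps_le : Tᶜ ⊆ Iic f := fun _ h => hf.2 h
  have hfin : Tᶜ.Finite := (finite_Iic f).subset hgaps_le
  have hreflect : (Tᶜ ∩ {h | f - h ∈ T}).ncard = (Iic f ∩ T).ncard := by
    refine ncard_congr (fun h _ => f - h) (fun h hh => ⟨mem_Iic.2 tsub_le_self, hh.2⟩)
      (fun a b ha hb hab => (tsub_right_inj (hf.2 ha.1) (hf.2 hb.1)).1 hab) ?_
    intro z hz
    have hreflect_z : f - (f - z) = z := tsub_tsub_cancel_of_le hz.1
    refine ⟨f - z, ⟨sub_notMem_of_mem_of_le hT hf hz.2 hz.1, ?_⟩, hreflect_z⟩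
    show f - (f - z) ∈ T
    rw [hreflect_z]
    exact hz.2
  have hbelow := ncard_inter_add_ncard_sdiff_eq_ncard (Iic f) T (finite_Iic f)
  have hgaps := ncard_inter_add_ncard_sdiff_eq_ncard Tᶜ {h | f - h ∈ T} hfin
  rw [Set.sdiff_eq, inter_eq_right.2 hgaps_le, ncard_Iic_eq_prod] at hbelow
  rw [hreflect] at hgaps
  change _ + (dualGaps T f).ncard = genus T at hgaps
  change _ + genus T = _ at hbelow
  omega

theorem PF_subset_insert_dualGaps (hf : IsGreatest Tᶜ f) :
    PF T ⊆ insert f (dualGaps T f) := by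
  intro p hp
  rw [mem_insert_iff, or_iff_not_imp_left]
  intro hpf
  refine ⟨hp.1, fun hfp => hf.1 ?_⟩
  have hsub : f - p ≠ 0 := fun h => hpf (le_antisymm (hf.2 hp.1) (tsub_eq_zero_iff_le.1 h))
  simpa [add_tsub_cancel_of_le (hf.2 hp.1)] using hp.2 (f - p) hfp hsub

theorem typ_le_ncard_dualGaps_add_one (hf : IsGreatest Tᶜ f) :
    typ T ≤ (dualGaps T f).ncard + 1 :=
  (ncard_le_ncard (PF_subset_insert_dualGaps hf)
    ((((finite_Iic f).subset hf.2).subset fun _ h => h.1).insert f)).trans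
    (ncard_insert_le _ _)

theorem AlmostSymmetric.two_mul_genus_add_one (hT : IsGNS T) (hf : IsGreatest Tᶜ f)
    (hAS : AlmostSymmetric T) :
    2 * genus T + 1 = typ T + ∏ i, (f i + 1) := by
  obtain ⟨h, hh, heq⟩ := hAS
  have hprod : ∏ i, (h i + 1) ≤ ∏ i, (f i + 1) :=
    Finset.prod_le_prod (fun _ _ => Nat.zero_le _) fun i _ => Nat.succ_le_succ (hf.2 hh i)
  have := two_mul_genus_eq_s17 hT hf
  have := typ_le_ncard_dualGaps_add_one hf
  omega

theorem AlmostSymmetric.PF_eq_insert_dualGaps (hT : IsGNS T) (hf : IsGreatest Tᶜ f)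
    (hAS : AlmostSymmetric T) :
    PF T = insert f (dualGaps T f) := by
  have hfin : (dualGaps T f).Finite := ((finite_Iic f).subset hf.2).subset fun _ h => h.1
  have hf_notMem : f ∉ dualGaps T f := fun h => h.2 (by simpa using hT.1)
  refine eq_of_subset_of_ncard_le (PF_subset_insert_dualGaps hf) ?_ (hfin.insert f)
  have := two_mul_genus_eq_s17 hT hf
  have := hAS.two_mul_genus_add_one hT hf
  rw [ncard_insert_of_notMem hf_notMem hfin]
  change _ ≤ typ T
  omega

theorem IsMonomialOrder.not_lt_of_le {lt : (Fin d → ℕ) → (Fin d → ℕ) → Prop}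
    (hlt : IsMonomialOrder d lt) {a b : Fin d → ℕ} (hab : a ≤ b) : ¬ lt b a := by
  intro hba
  obtain rfl | hne := eq_or_ne a b
  · exact hlt.1 a hba
  have hpos : lt (0 + a) (b - a + a) :=
    hlt.2.2.2.1 a 0 (b - a) <| hlt.2.2.2.2 _ fun h =>
      hne (le_antisymm hab (tsub_eq_zero_iff_le.1 h))
  rw [zero_add, tsub_add_cancel_of_le hab] at hpos
  exact hlt.1 a (hlt.2.1 _ _ _ hpos hba)

theorem IsMonomialOrder.minimal_of_forall_lt {lt : (Fin d → ℕ) → (Fin d → ℕ) → Prop}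
    (hlt : IsMonomialOrder d lt) (hxT : x ∈ T) (hx0 : x ≠ 0) (hxf : x ≤ f)
    (hmin : ∀ z ∈ T, z ≠ 0 → z ≤ f → z = x ∨ lt x z) :
    Minimal (· ∈ T \ {0}) x := by
  refine ⟨⟨hxT, hx0⟩, fun y hy hyx => ?_⟩
  rcases hmin y hy.1 hy.2 (hyx.trans hxf) with rfl | hxy
  · exact le_rfl
  · exact absurd hxy (hlt.not_lt_of_le hyx)

theorem PF_diff_singleton_subset (hf : IsGreatest Tᶜ f)
    (hPF : PF T = insert f (dualGaps T f)) :
    PF (T \ {x}) ⊆ insert x (insert (f - x) (PF T)) := by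
  intro p hp
  simp only [mem_insert_iff]
  refine or_iff_not_imp_left.2 fun hpx => or_iff_not_imp_left.2 fun hpfx => ?_
  have hpT : p ∉ T := fun h => hp.1 ⟨h, hpx⟩
  rw [hPF]
  refine or_iff_not_imp_left.2 fun hpf => ⟨hpT, fun hfp => hf.1 ?_⟩
  have hpf_le : p ≤ f := hf.2 hpT
  have hfpx : f - p ≠ x := fun h => hpfx (by rw [← h, tsub_tsub_cancel_of_le hpf_le])
  have hfp0 : f - p ≠ 0 := fun h => hpf (le_antisymm hpf_le (tsub_eq_zero_iff_le.1 h))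
  simpa [add_tsub_cancel_of_le hpf_le] using (hp.2 (f - p) ⟨hfp, hfpx⟩ hfp0).1

theorem mem_PF_diff_singleton_self (hT : IsGNS T) (hxT : x ∈ T) : x ∈ PF (T \ {x}) :=
  ⟨fun h => h.2 rfl, fun s hs hs0 =>
    ⟨hT.2.1 x s hxT hs.1, fun h => hs0 (add_eq_left.1 h)⟩⟩

section RemoveMinimal

variable (hx : Minimal (· ∈ T \ {0}) x)
include hx

theorem isMinGen_of_minimal : IsMinGen T x := by
  refine ⟨hx.prop.1, hx.prop.2, fun y hy z _ hy0 hz0 hyz => ?_⟩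
  have hyx : y = x := hx.eq_of_le ⟨hy, hy0⟩ (hyz ▸ le_self_add)
  subst hyz
  exact hz0 (by simpa using hyx)

theorem PF_subset_PF_diff_singleton_s17 : PF T ⊆ PF (T \ {x}) := by
  rintro p ⟨hpT, hp⟩
  refine ⟨fun h => hpT h.1, fun s hs hs0 => ⟨hp s hs.1 hs0, fun hpsx => hs.2 ?_⟩⟩
  exact hx.eq_of_le ⟨hs.1, hs0⟩ (le_add_self.trans_eq hpsx)

theorem sub_mem_PF_diff_singleton (hT : IsGNS T) (hf : IsGreatest Tᶜ f) (hxf : x ≤ f) :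
    f - x ∈ PF (T \ {x}) := by
  refine ⟨fun h => sub_notMem_of_mem_of_le hT hf hx.prop.1 hxf h.1, fun s hs hs0 => ?_⟩
  have hsx : ¬ s ≤ x := fun h => hs.2 (hx.eq_of_le ⟨hs.1, hs0⟩ h)
  refine ⟨by_contra fun h => hsx fun i => ?_, fun h => hsx (le_add_self.trans_eq h)⟩
  have hi := hf.2 h i
  have hxfi := hxf i
  simp only [Pi.add_apply, Pi.sub_apply] at hi hxfi ⊢
  omega

theorem typ_diff_singleton (hT : IsGNS T) (hf : IsGreatest Tᶜ f) (hxf : x ≤ f)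
    (hPF : PF T = insert f (dualGaps T f)) : typ (T \ {x}) = typ T + 2 := by
  have hxT := hx.prop.1
  have hPF' : PF (T \ {x}) = insert x (insert (f - x) (PF T)) := by
    refine (PF_diff_singleton_subset hf hPF).antisymm (insert_subset_iff.2 ⟨?_, ?_⟩)
    · exact mem_PF_diff_singleton_self hT hxT
    exact insert_subset_iff.2
      ⟨sub_mem_PF_diff_singleton hx hT hf hxf, PF_subset_PF_diff_singleton_s17 hx⟩
  have hfin : (PF T).Finite := hT.2.2.subset fun _ h => h.1
  have hfx : f - x ∉ PF T := fun h =>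
    hf.1 (tsub_add_cancel_of_le hxf ▸ h.2 x hxT hx.prop.2)
  have hx_ne : x ≠ f - x := fun h =>
    hf.1 (tsub_add_cancel_of_le hxf ▸ h ▸ hT.2.1 x x hxT hxT)
  have hx' : x ∉ insert (f - x) (PF T) := by
    rintro (h | h)
    exacts [hx_ne h, h.1 hxT]
  rw [typ, hPF', ncard_insert_of_notMem hx' (hfin.insert _), ncard_insert_of_notMem hfx hfin]
  rfl

end RemoveMinimal

theorem compl_diff_singleton : (T \ {x})ᶜ = insert x Tᶜ := by
  rw [compl_sdiff, singleton_union]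

theorem genus_diff_singleton (hfin : Tᶜ.Finite) (hxT : x ∈ T) :
    genus (T \ {x}) = genus T + 1 := by
  rw [genus, compl_diff_singleton, ncard_insert_of_notMem (not_not.2 hxT) hfin]
  rfl

theorem isGreatest_compl_diff_singleton (hf : IsGreatest Tᶜ f) (hxf : x ≤ f) :
    IsGreatest (T \ {x})ᶜ f := by
  rw [compl_diff_singleton]
  exact ⟨mem_insert_of_mem x hf.1, forall_mem_insert.2 ⟨hxf, hf.2⟩⟩

theorem statement17_general (d : ℕ) (T : Set (Fin d → ℕ)) (hT : IsGNS T)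
    (f : Fin d → ℕ) (hf : IsFrobenius T f) (hAS : AlmostSymmetric T)
    (lt : (Fin d → ℕ) → (Fin d → ℕ) → Prop) (hlt : IsMonomialOrder d lt)
    (x : Fin d → ℕ) (hxT : x ∈ T) (hx0 : x ≠ 0) (hxf : x ≤ f)
    (hmin : ∀ z ∈ T, z ≠ 0 → z ≤ f → z = x ∨ lt x z) :
    IsMinGen T x ∧ f - x ∈ PF (T \ {x}) ∧
      AlmostSymmetric (T \ {x}) ∧ IsFrobenius (T \ {x}) f := by
  have hf' : IsGreatest Tᶜ f := hf.isGreatest hT.2.2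
  have hx : Minimal (· ∈ T \ {0}) x := hlt.minimal_of_forall_lt hxT hx0 hxf hmin
  have hPF := hAS.PF_eq_insert_dualGaps hT hf'
  have hcount := hAS.two_mul_genus_add_one hT hf'
  refine ⟨isMinGen_of_minimal hx, sub_mem_PF_diff_singleton hx hT hf' hxf,
    ⟨f, fun h => hf'.1 h.1, ?_⟩,
    isFrobenius_of_isGreatest (isGreatest_compl_diff_singleton hf' hxf)⟩
  rw [genus_diff_singleton hT.2.2 hxT, typ_diff_singleton hx hT hf' hxf hPF]
  omega

/-- for a nonordinary almost symmetric GNS `(T,f)` and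
`x = low_≺(T)`, `x` is a minimal generator, `f - x ∈ PF(T ∖ {x})`, and `T ∖ {x}`
is an almost symmetric GNS with Frobenius element `f`. -/
theorem statement17 (d : ℕ) (hd : 0 < d) (T : Set (Fin d → ℕ)) (hT : IsGNS T)
    (f : Fin d → ℕ) (hf : IsFrobenius T f) (hAS : AlmostSymmetric T)
    (lt : (Fin d → ℕ) → (Fin d → ℕ) → Prop) (hlt : IsMonomialOrder d lt)
    (x : Fin d → ℕ) (hxT : x ∈ T) (hx0 : x ≠ 0) (hxf : x ≤ f)
    (hmin : ∀ z ∈ T, z ≠ 0 → z ≤ f → z = x ∨ lt x z) :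
    IsMinGen T x ∧ f - x ∈ PF (T \ {x}) ∧
      AlmostSymmetric (T \ {x}) ∧ IsFrobenius (T \ {x}) f :=
  statement17_general d T hT f hf hAS lt hlt x hxT hx0 hxf hmin
end

section
/- Let (T, f) be an irreducible GNS in ℕ_0^d and let A be a set of minimal generators of T each of which is ≤ f with respect to the componentwise order, and set S = T ∖ A (which is a Frobenius GNS with Frobenius element f). Then PF(S) = PF(T) ∪ {x : x ∈ A} ∪ {f − x : x ∈ A} if and only if x + y − f ∉ S for all x, y ∈ A (difference taken in ℤ^d; in particular the condition holds automatically when x + y − f ∉ ℕ_0^d). -/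
open scoped BigOperators

/-! An irreducible GNS `T` with Frobenius element `f` is symmetric or pseudo-symmetric:
`f - x ∈ T` for every gap `x` with `2x ≠ f`. Otherwise a componentwise maximal gap `m` with
`f - m ∉ T` and `2m ≠ f` is pseudo-Frobenius with `2m ∈ T`, and `T = (T ∪ {f}) ∩ (T ∪ {m})`.
In particular `PF T ⊆ {f, f/2}`, and symmetry alone gives `PF(T ∖ A) ⊆ PF T ∪ A ∪ (f - A)`.
The reverse inclusion can only fail when `f - x + s` or `f/2 + s` (with `x ∈ A`, `s ∈ T ∖ A`)
drops out of `T ∖ A`, and each way this happens yields `x, y ∈ A` with `x + y - f ∈ T ∖ A`;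
conversely `s = x + y - f ∈ T ∖ A` gives `f - x + s = y ∉ T ∖ A`. -/

open Set

variable {d : ℕ} {T A : Set (Fin d → ℕ)} {f : Fin d → ℕ}

namespace IsFrobenius

theorem notMem_s19 (hf : IsFrobenius T f) : f ∉ T :=
  (show f ∈ Maximals (· ≤ ·) Tᶜ from hf ▸ rfl).1

theorem le_of_notMem_s19 (hfin : Tᶜ.Finite) (hf : IsFrobenius T f) {x : Fin d → ℕ} (hx : x ∉ T) :
    x ≤ f := by
  obtain ⟨m, hxm, hm⟩ := hfin.exists_le_maximal hx
  have hmf : m ∈ Maximals (· ≤ ·) Tᶜ := ⟨hm.1, fun y hy hmy => hmy.antisymm (hm.2 hy hmy)⟩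
  rw [hf, mem_singleton_iff] at hmf
  exact hmf ▸ hxm

theorem eq_zero_of_add_notMem (hfin : Tᶜ.Finite) (hf : IsFrobenius T f) {t : Fin d → ℕ}
    (ht : f + t ∉ T) : t = 0 :=
  add_eq_left.mp ((hf.le_of_notMem_s19 hfin ht).antisymm le_self_add)

end IsFrobenius

namespace IsGNS

theorem frobenius_mem_PF (hT : IsGNS T) (hf : IsFrobenius T f) : f ∈ PF T :=
  ⟨hf.notMem_s19, fun _ _ ht0 => by_contra fun h => ht0 (hf.eq_zero_of_add_notMem hT.2.2 h)⟩

theorem frobenius_add_self_mem (hT : IsGNS T) (hf : IsFrobenius T f) : f + f ∈ T :=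
  by_contra fun h => hf.notMem_s19 (hf.eq_zero_of_add_notMem hT.2.2 h ▸ hT.1)

theorem sub_notMem_of_frobenius (hT : IsGNS T) (hf : IsFrobenius T f) {x : Fin d → ℕ}
    (hx : x ∈ T) (hxf : x ≤ f) : f - x ∉ T := fun h =>
  hf.notMem_s19 (tsub_add_cancel_of_le hxf ▸ hT.2.1 _ _ h hx)

theorem insert_of_mem_PF (hT : IsGNS T) {h : Fin d → ℕ} (hh : h ∈ PF T) (h2 : h + h ∈ T) :
    IsGNS (insert h T) := by
  obtain ⟨h0, hadd, hfin⟩ := hT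
  have hmem : ∀ t ∈ T, h + t ∈ insert h T := fun t ht => by
    rcases eq_or_ne t 0 with rfl | ht0
    · exact Or.inl (add_zero h)
    · exact mem_insert_of_mem h (hh.2 t ht ht0)
  refine ⟨mem_insert_of_mem h h0, ?_, hfin.subset (compl_subset_compl.mpr (subset_insert h T))⟩
  rintro x y (rfl | hx) (rfl | hy)
  · exact mem_insert_of_mem _ h2
  · exact hmem y hy
  · exact add_comm y x ▸ hmem x hx
  · exact mem_insert_of_mem _ (hadd x y hx hy)

theorem not_irreducible_of_mem_PF (hT : IsGNS T) {h₁ h₂ : Fin d → ℕ} (hne : h₁ ≠ h₂)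
    (hh₁ : h₁ ∈ PF T) (h₁₁ : h₁ + h₁ ∈ T) (hh₂ : h₂ ∈ PF T) (h₂₂ : h₂ + h₂ ∈ T) :
    ¬ GNSIrreducible T := by
  refine not_not.mpr ⟨insert h₁ T, insert h₂ T, hT.insert_of_mem_PF hh₁ h₁₁,
    hT.insert_of_mem_PF hh₂ h₂₂, ssubset_insert hh₁.1, ssubset_insert hh₂.1, ?_⟩
  ext x
  simp only [mem_inter_iff, mem_insert_iff]
  constructor
  · exact fun hx => ⟨Or.inr hx, Or.inr hx⟩
  · rintro ⟨rfl | hx, rfl | hx'⟩ <;> first | assumption | exact absurd rfl hne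

end IsGNS

def asymmetricGaps (T : Set (Fin d → ℕ)) (f : Fin d → ℕ) : Set (Fin d → ℕ) :=
  {x | x ∉ T ∧ f - x ∉ T ∧ x + x ≠ f}

section MaximalAsymmetricGap

variable {m : Fin d → ℕ}

theorem eq_of_maximal_asymmetricGaps_of_le (hT : IsGNS T) (hf : IsFrobenius T f)
    (hm : Maximal (· ∈ asymmetricGaps T f) m) {u : Fin d → ℕ} (hu : u ∉ T) (hfu : f - u ∉ T)
    (hmu : m ≤ u) : u = m := by
  obtain ⟨⟨hmT, hfmT, hmm⟩, hmax⟩ := hm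
  have hmf := hf.le_of_notMem_s19 hT.2.2 hmT
  by_cases huu : u + u = f
  · -- `f - m` is asymmetric too and lies above `u = f / 2`, so maximality forces `u = m`
    have hfm : f - m ∈ asymmetricGaps T f := by
      refine ⟨hfmT, by rwa [tsub_tsub_cancel_of_le hmf], fun h => hmm ?_⟩
      funext i
      have := congrFun h i; have := hmf i
      simp only [Pi.add_apply, Pi.sub_apply] at *
      omega
    have hufm : u ≤ f - m := fun i => by
      have := congrFun huu i; have := hmu i
      simp only [Pi.add_apply, Pi.sub_apply] at *
      omega
    exact hmu.antisymm' (hufm.trans (hmax hfm (hmu.trans hufm)))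
  · exact hmu.antisymm' (hmax ⟨hu, hfu, huu⟩ hmu)

theorem mem_PF_of_maximal_asymmetricGaps (hT : IsGNS T) (hf : IsFrobenius T f)
    (hm : Maximal (· ∈ asymmetricGaps T f) m) : m ∈ PF T := by
  refine ⟨hm.1.1, fun t ht ht0 => by_contra fun hmt => ht0 ?_⟩
  have hmtf := hf.le_of_notMem_s19 hT.2.2 hmt
  have hfmt : f - (m + t) ∉ T := fun h => hm.1.2.1 <| by
    convert hT.2.1 _ _ h ht using 1
    funext i
    have := hmtf i
    simp only [Pi.add_apply, Pi.sub_apply] at *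
    omega
  simpa using eq_of_maximal_asymmetricGaps_of_le hT hf hm hmt hfmt le_self_add

theorem add_self_mem_of_maximal_asymmetricGaps (hT : IsGNS T) (hf : IsFrobenius T f)
    (hm : Maximal (· ∈ asymmetricGaps T f) m) : m + m ∈ T := by
  obtain ⟨hmT, hfmT, hmm⟩ := hm.1
  refine by_contra fun h2m => hmT ?_
  have h2mf := hf.le_of_notMem_s19 hT.2.2 h2m
  have hf2m : f - (m + m) ∉ T := by
    intro h
    rcases eq_or_ne (f - (m + m)) 0 with h0 | h0
    · exact hmm (h2mf.antisymm (tsub_eq_zero_iff_le.mp h0))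
    · refine hfmT ?_
      convert (mem_PF_of_maximal_asymmetricGaps hT hf hm).2 _ h h0 using 1
      funext i
      have := h2mf i
      simp only [Pi.add_apply, Pi.sub_apply] at *
      omega
  have := eq_of_maximal_asymmetricGaps_of_le hT hf hm h2m hf2m le_self_add
  exact add_eq_left.mp this ▸ hT.1

end MaximalAsymmetricGap

namespace GNSIrreducible

theorem sub_mem (hirr : GNSIrreducible T) (hT : IsGNS T) (hf : IsFrobenius T f)
    {x : Fin d → ℕ} (hx : x ∉ T) (hxx : x + x ≠ f) : f - x ∈ T := by
  refine by_contra fun hfx => ?_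
  obtain ⟨m, -, hm⟩ := (hT.2.2.subset fun z (hz : z ∈ asymmetricGaps T f) => hz.1).exists_le_maximal
    (show x ∈ asymmetricGaps T f from ⟨hx, hfx, hxx⟩)
  have hfm : f ≠ m := fun h => hm.1.2.1 (by rw [h, tsub_self]; exact hT.1)
  exact hT.not_irreducible_of_mem_PF hfm (hT.frobenius_mem_PF hf) (hT.frobenius_add_self_mem hf)
    (mem_PF_of_maximal_asymmetricGaps hT hf hm) (add_self_mem_of_maximal_asymmetricGaps hT hf hm)
    hirr

theorem mem_PF_of_add_self_eq (hirr : GNSIrreducible T) (hT : IsGNS T) (hf : IsFrobenius T f)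
    {h : Fin d → ℕ} (hh : h ∉ T) (hhh : h + h = f) : h ∈ PF T := by
  refine ⟨hh, fun t ht ht0 => by_contra fun hht => hh ?_⟩
  have hhtf := hf.le_of_notMem_s19 hT.2.2 hht
  have hne : h + t + (h + t) ≠ f := fun he => ht0 <| funext fun i => by
    have := congrFun he i; have := congrFun hhh i
    simp only [Pi.add_apply, Pi.zero_apply] at *
    omega
  convert hT.2.1 _ _ (hirr.sub_mem hT hf hht hne) ht using 1
  funext i
  have := congrFun hhh i; have := hhtf i
  simp only [Pi.add_apply, Pi.sub_apply] at *
  omega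

theorem eq_or_add_self_eq_of_mem_PF (hirr : GNSIrreducible T) (hT : IsGNS T)
    (hf : IsFrobenius T f) {h : Fin d → ℕ} (hh : h ∈ PF T) : h = f ∨ h + h = f := by
  refine or_iff_not_imp_right.mpr fun hhh => by_contra fun hne => hf.notMem_s19 ?_
  have hhf := hf.le_of_notMem_s19 hT.2.2 hh.1
  have hfh0 : f - h ≠ 0 := fun h0 => hne (hhf.antisymm (tsub_eq_zero_iff_le.mp h0))
  simpa [add_tsub_cancel_of_le hhf] using hh.2 _ (hirr.sub_mem hT hf hh.1 hhh) hfh0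

end GNSIrreducible

theorem add_mem_diff_of_isMinGen (hT : IsGNS T) (hA : ∀ x ∈ A, IsMinGen T x)
    {s t : Fin d → ℕ} (hs : s ∈ T) (ht : t ∈ T) (hs0 : s ≠ 0) (ht0 : t ≠ 0) : s + t ∈ T \ A :=
  ⟨hT.2.1 s t hs ht, fun h => (hA _ h).2.2 s hs t ht hs0 ht0 rfl⟩

theorem subset_PF_diff_of_isMinGen (hT : IsGNS T) (hA : ∀ x ∈ A, IsMinGen T x) :
    A ⊆ PF (T \ A) := fun x hx =>
  ⟨fun h => h.2 hx, fun _ hs hs0 =>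
    add_mem_diff_of_isMinGen hT hA (hA x hx).1 hs.1 (hA x hx).2.1 hs0⟩

theorem PF_diff_subset (hT : IsGNS T) (hf : IsFrobenius T f) (hirr : GNSIrreducible T) :
    PF (T \ A) ⊆ PF T ∪ A ∪ (fun x => f - x) '' A := by
  intro h hh
  by_cases hhA : h ∈ A
  · exact Or.inl (Or.inr hhA)
  have hhT : h ∉ T := fun h' => hh.1 ⟨h', hhA⟩
  have hhf := hf.le_of_notMem_s19 hT.2.2 hhT
  rcases eq_or_ne h f with rfl | hne
  · exact Or.inl (Or.inl (hT.frobenius_mem_PF hf))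
  by_cases hhh : h + h = f
  · exact Or.inl (Or.inl (hirr.mem_PF_of_add_self_eq hT hf hhT hhh))
  have hfh0 : f - h ≠ 0 := fun h0 => hne (hhf.antisymm (tsub_eq_zero_iff_le.mp h0))
  have hfhA : f - h ∈ A := by_contra fun hfhA => hf.notMem_s19 <| by
    simpa [add_tsub_cancel_of_le hhf] using (hh.2 _ ⟨hirr.sub_mem hT hf hhT hhh, hfhA⟩ hfh0).1
  exact Or.inr ⟨f - h, hfhA, tsub_tsub_cancel_of_le hhf⟩

theorem not_exists_add_eq_of_sub_mem_PF_diff (hT : IsGNS T) (hf : IsFrobenius T f)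
    {x y : Fin d → ℕ} (hxT : x ∈ T) (hxf : x ≤ f) (hy : y ∈ A) (hyT : y ∈ T)
    (hfx : f - x ∈ PF (T \ A)) : ¬ ∃ s ∈ T \ A, s + f = x + y := by
  rintro ⟨s, hs, hsf⟩
  rcases eq_or_ne s 0 with rfl | hs0
  · rw [zero_add] at hsf
    exact hf.notMem_s19 (hsf ▸ hT.2.1 x y hxT hyT)
  have hfxs : f - x + s = y := funext fun i => by
    have := congrFun hsf i; have := hxf i
    simp only [Pi.add_apply, Pi.sub_apply] at *
    omega
  exact (hfx.2 s hs hs0).2 (hfxs ▸ hy)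

theorem PF_subset_PF_diff (hT : IsGNS T) (hf : IsFrobenius T f) (hirr : GNSIrreducible T)
    (hA : ∀ x ∈ A, IsMinGen T x ∧ x ≤ f)
    (hC : ∀ x ∈ A, ∀ y ∈ A, ¬ ∃ s ∈ T \ A, s + f = x + y) : PF T ⊆ PF (T \ A) := by
  intro h hh
  refine ⟨fun h' => hh.1 h'.1, fun s hs hs0 => ⟨hh.2 s hs.1 hs0, fun hhsA => ?_⟩⟩
  rcases hirr.eq_or_add_self_eq_of_mem_PF hT hf hh with rfl | hhh
  · exact hs0 (add_eq_left.mp ((hA _ hhsA).2.antisymm le_self_add))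
  · refine hC _ hhsA _ hhsA ⟨s + s, add_mem_diff_of_isMinGen hT (fun x hx => (hA x hx).1)
      hs.1 hs.1 hs0 hs0, ?_⟩
    rw [← hhh]
    abel

theorem sub_mem_PF_diff (hT : IsGNS T) (hf : IsFrobenius T f) (hirr : GNSIrreducible T)
    (hA : ∀ x ∈ A, IsMinGen T x ∧ x ≤ f)
    (hC : ∀ x ∈ A, ∀ y ∈ A, ¬ ∃ s ∈ T \ A, s + f = x + y) {x : Fin d → ℕ} (hx : x ∈ A) :
    f - x ∈ PF (T \ A) := by
  obtain ⟨⟨hxT, -, hxgen⟩, hxf⟩ := hA x hx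
  refine ⟨fun h => hT.sub_notMem_of_frobenius hf hxT hxf h.1,
    fun s hs hs0 => by_contra fun hg => ?_⟩
  by_cases hgA : f - x + s ∈ A
  · refine hC x hx _ hgA ⟨s, hs, funext fun i => ?_⟩
    have := hxf i
    simp only [Pi.add_apply, Pi.sub_apply] at *
    omega
  have hgT : f - x + s ∉ T := fun h => hg ⟨h, hgA⟩
  by_cases hgg : f - x + s + (f - x + s) = f
  · refine hC x hx x hx ⟨s + s, add_mem_diff_of_isMinGen hT (fun x hx => (hA x hx).1)
      hs.1 hs.1 hs0 hs0, funext fun i => ?_⟩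
    have := congrFun hgg i; have := hxf i
    simp only [Pi.add_apply, Pi.sub_apply] at *
    omega
  have hgf := hf.le_of_notMem_s19 hT.2.2 hgT
  have hsum : f - (f - x + s) + s = x := funext fun i => by
    have := hgf i; have := hxf i
    simp only [Pi.add_apply, Pi.sub_apply] at *
    omega
  have hw0 : f - (f - x + s) ≠ 0 := fun h0 => hs.2 (by rw [h0, zero_add] at hsum; exact hsum ▸ hx)
  exact hxgen _ (hirr.sub_mem hT hf hgT hgg) s hs.1 hw0 hs0 hsum

theorem statement19_general (d : ℕ) (T : Set (Fin d → ℕ)) (hT : IsGNS T)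
    (f : Fin d → ℕ) (hf : IsFrobenius T f) (hirr : GNSIrreducible T)
    (A : Set (Fin d → ℕ)) (hA : ∀ x ∈ A, IsMinGen T x ∧ x ≤ f) :
    PF (T \ A) = PF T ∪ A ∪ (fun x => f - x) '' A ↔
      ∀ x ∈ A, ∀ y ∈ A, ¬ ∃ s ∈ T \ A, s + f = x + y := by
  constructor
  · intro hPF x hx y hy
    exact not_exists_add_eq_of_sub_mem_PF_diff hT hf (hA x hx).1.1 (hA x hx).2 hy (hA y hy).1.1
      (hPF ▸ Or.inr ⟨x, hx, rfl⟩)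
  · intro hC
    refine (PF_diff_subset hT hf hirr).antisymm (union_subset (union_subset ?_ ?_) ?_)
    · exact PF_subset_PF_diff hT hf hirr hA hC
    · exact subset_PF_diff_of_isMinGen hT fun x hx => (hA x hx).1
    · rintro _ ⟨x, hx, rfl⟩
      exact sub_mem_PF_diff hT hf hirr hA hC hx

/-- for an irreducible GNS `(T,f)` and a set `A` of minimal generators of
`T` below `f`, setting `S = T ∖ A`, one has `PF(S) = PF(T) ∪ A ∪ (f - A)` iff
`x + y - f ∉ S` for all `x, y ∈ A`. -/
theorem statement19 (d : ℕ) (hd : 0 < d) (T : Set (Fin d → ℕ)) (hT : IsGNS T)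
    (f : Fin d → ℕ) (hf : IsFrobenius T f) (hirr : GNSIrreducible T)
    (A : Set (Fin d → ℕ)) (hA : ∀ x ∈ A, IsMinGen T x ∧ x ≤ f) :
    PF (T \ A) = PF T ∪ A ∪ (fun x => f - x) '' A ↔
      ∀ x ∈ A, ∀ y ∈ A, ¬ ∃ s ∈ T \ A, s + f = x + y :=
  statement19_general d T hT f hf hirr A hA
end
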